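/- With the notation of the Galil–Seiferas-style lemma (A = X₁X₂ = Y₁Y₂ = Z₁Z₂, B = X_Q X̂₂ = Ŷ₁Ŷ₂ = Ẑ₁Z_Q, |X₁| < |Y₁| < |Z₁|, |A| = |B|), let V be the word with Y₁V = Z₁. Then V̂ is a period of Ẑ₁, i.e., Ẑ₁ is a prefix of V̂^k for some k ≥ 1. -/

import Mathlib

inductive Letter | u | d | l | r
deriving DecidableEq, Repr

def Letter.comp : Letter → Letter
  | .u => .d
  | .d => .u
  | .l => .r
  | .r => .l

/-- The backtrack of a word: the letterwise complement of the reverse. -/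
def backtrack (W : List Letter) : List Letter := W.reverse.map Letter.comp

/-- `X` is a period of `W`: `|X| ≤ |W|` and `W` is a prefix of `X^k` for some `k ≥ 1`. -/
def IsPeriodOf (X W : List Letter) : Prop :=
  X.length ≤ W.length ∧ ∃ k, 1 ≤ k ∧ W <+: (List.replicate k X).flatten

/-!
Ŷ₁ and Ẑ₁ = V̂Ŷ₁ are both prefixes of B, so Ŷ₁ is a prefix of V̂Ŷ₁. A word W with
W <+: XW satisfies W <+: XᵏW for every k, so XW is a prefix of a power of X as soon as
that power is at least as long as XW.
-/

namespace List

variable {α : Type*}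

theorem length_flatten_replicate (k : ℕ) (X : List α) :
    (replicate k X).flatten.length = k * X.length := by
  simp [length_flatten]

theorem prefix_flatten_replicate_append_of_prefix_append {X W : List α} (h : W <+: X ++ W) :
    ∀ k, W <+: (replicate k X).flatten ++ W
  | 0 => by simp
  | k + 1 => by
    obtain ⟨t, ht⟩ := prefix_flatten_replicate_append_of_prefix_append h k
    refine h.trans ⟨t, ?_⟩
    rw [replicate_succ, flatten_cons, append_assoc, append_assoc, ht]

theorem append_prefix_flatten_replicate_of_prefix_append {X W : List α} (hX : X ≠ [])
    (h : W <+: X ++ W) : X ++ W <+: (replicate (W.length + 1) X).flatten := by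
  have hpow : X ++ W <+: (replicate (W.length + 1) X).flatten ++ W := by
    rw [replicate_succ, flatten_cons, append_assoc]
    exact (prefix_append_right_inj X).mpr (prefix_flatten_replicate_append_of_prefix_append h _)
  refine prefix_of_prefix_length_le hpow (prefix_append _ _) ?_
  have hXlen : 1 ≤ X.length := length_pos_iff.mpr hX
  rw [length_append, length_flatten_replicate]
  nlinarith

end List

theorem backtrack_append (a b : List Letter) :
    backtrack (a ++ b) = backtrack b ++ backtrack a := by
  simp [backtrack]

theorem backtrack_length (a : List Letter) : (backtrack a).length = a.length := by
  simp [backtrack]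

theorem backtrack_ne_nil {a : List Letter} (h : a ≠ []) : backtrack a ≠ [] := by
  simpa [backtrack] using h

theorem isPeriodOf_append_of_prefix_append {X W : List Letter} (hX : X ≠ [])
    (h : W <+: X ++ W) : IsPeriodOf X (X ++ W) :=
  ⟨by simp, W.length + 1, by omega, List.append_prefix_flatten_replicate_of_prefix_append hX h⟩

theorem backV_period_backZ1_general (B Y1 Y2 Z1 ZQ V : List Letter)
    (hB2 : B = backtrack Y1 ++ backtrack Y2)
    (hB3 : B = backtrack Z1 ++ ZQ)
    (h23 : Y1.length < Z1.length)
    (hV : Y1 ++ V = Z1) :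
    IsPeriodOf (backtrack V) (backtrack Z1) := by
  have hZ : backtrack Z1 = backtrack V ++ backtrack Y1 := by
    rw [← hV, backtrack_append]
  have hV_ne : V ≠ [] := by
    rintro rfl
    simp [← hV] at h23
  have hY_prefix : backtrack Y1 <+: backtrack Z1 :=
    List.prefix_of_prefix_length_le (hB2 ▸ List.prefix_append _ _)
      (hB3 ▸ List.prefix_append _ _) (by simp only [backtrack_length]; omega)
  rw [hZ] at hY_prefix ⊢
  exact isPeriodOf_append_of_prefix_append (backtrack_ne_nil hV_ne) hY_prefix

theorem backV_period_backZ1 (A B X1 X2 Y1 Y2 Z1 Z2 XQ ZQ V : List Letter)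
    (hAB : A.length = B.length)
    (hA1 : A = X1 ++ X2) (hA2 : A = Y1 ++ Y2) (hA3 : A = Z1 ++ Z2)
    (hB1 : B = XQ ++ backtrack X2) (hB2 : B = backtrack Y1 ++ backtrack Y2)
    (hB3 : B = backtrack Z1 ++ ZQ)
    (hXQ : XQ.length = X1.length) (hZQ : ZQ.length = Z2.length)
    (h12 : X1.length < Y1.length) (h23 : Y1.length < Z1.length)
    (hV : Y1 ++ V = Z1) :
    IsPeriodOf (backtrack V) (backtrack Z1) :=
  backV_period_backZ1_general B Y1 Y2 Z1 ZQ V hB2 hB3 h23 hV
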